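/- arXiv:1511.09410 — 4 statements merged into one kernel-verified Lean document; each statement's English description precedes it below -/
import Mathlib

section
/- Let ν ≥ 0 be an integer, g > 0, κ > 1, and let s, t be fixed complex numbers. Set γ = min{κ, 2}. Then there exist C > 0 and N₀ ∈ ℕ such that for all integers N ≥ N₀ (in particular gN^{−κ} ∈ (0,1) and s ≠ N+1, t ≠ N+1), |A_N(s, t; gN^{−κ}) − 𝒫(s,t,ν)/N| ≤ C N^{−γ}. -/
open Filter Topology MeasureTheory

/-- Pochhammer symbol `(a)_k = a(a+1)⋯(a+k-1)`. -/
noncomputable def poch (a : ℂ) (k : ℕ) : ℂ := ∏ i ∈ Finset.range k, (a + i)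

/-- Modified Bessel function of the first kind of complex order `t`, real argument `z > 0`,
defined by its series, with `1/Γ = 0` at the poles of `Γ`. -/
noncomputable def besselI (t : ℂ) (z : ℝ) : ℂ :=
  ∑' m : ℕ, (1 / ((m.factorial : ℂ) * Complex.Gamma (t + m + 1))) *
    ((z / 2 : ℝ) : ℂ) ^ (2 * (m : ℂ) + t)

/-- Modified Bessel function of the second kind of complex order `κ` (with `Re κ > -1/2`),
real argument `z > 0`. -/
noncomputable def besselK (κ : ℂ) (z : ℝ) : ℂ :=
  Complex.Gamma (κ + 1 / 2) * ((2 * z : ℝ) : ℂ) ^ κ / (Real.sqrt Real.pi : ℂ) *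
    ∫ t in Set.Ioi (0 : ℝ), (Real.cos t : ℂ) * (((t ^ 2 + z ^ 2 : ℝ) : ℂ)) ^ (-κ - 1 / 2)

/-- Bessel function of the first kind of real order `ρ`, argument `z > 0`. -/
noncomputable def besselJ (ρ : ℝ) (z : ℝ) : ℝ :=
  ∑' m : ℕ, ((-1 : ℝ) ^ m / (m.factorial * Real.Gamma ((m : ℝ) + 1 + ρ))) *
    (z / 2) ^ (2 * (m : ℝ) + ρ)

/-- The function `P_n(x)`. -/
noncomputable def Pfun (ν : ℕ) (μ : ℝ) (n : ℕ) (x : ℝ) : ℂ :=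
  (-1 : ℂ) ^ n * (((ν + n).factorial : ℂ) * (n.factorial : ℂ) / (ν.factorial : ℂ)) *
    (Real.sqrt μ : ℂ)⁻¹ *
    ∑ k ∈ Finset.range (n + 1),
      ((2 * Real.sqrt x / (1 - μ) : ℝ) : ℂ) ^ k *
        (poch (-(n : ℂ)) k / (poch ((ν : ℂ) + 1) k * (k.factorial : ℂ))) *
        besselI (k : ℂ) ((1 - μ) * Real.sqrt x / μ)

/-- The function `Q_n(y)`. -/
noncomputable def Qfun (ν : ℕ) (μ : ℝ) (n : ℕ) (y : ℝ) : ℂ :=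
  (-1 : ℂ) ^ n * (2 / ((n.factorial : ℂ) ^ 2 * (ν.factorial : ℂ))) * (Real.sqrt μ : ℂ)⁻¹ *
    ∑ l ∈ Finset.range (n + 1),
      ((2 * Real.sqrt y / (1 + μ) : ℝ) : ℂ) ^ (l + ν) *
        (poch (-(n : ℂ)) l / (poch ((ν : ℂ) + 1) l * (l.factorial : ℂ))) *
        besselK ((l : ℂ) + ν) ((1 + μ) * Real.sqrt y / μ)

/-- The correlation kernel `K_N(x,y;μ) = ∑_{n=0}^{N-1} P_n(x) Q_n(y)`. -/
noncomputable def Kker (ν N : ℕ) (μ x y : ℝ) : ℂ :=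
  ∑ n ∈ Finset.range N, Pfun ν μ n x * Qfun ν μ n y

/-- The Bessel kernel in square-root variables, for `x ≠ y`. -/
noncomputable def SBessel (ν : ℕ) (x y : ℝ) : ℝ :=
  -(y / x) ^ ((ν : ℝ) / 2) *
    (2 * Real.sqrt x * besselJ ((ν : ℝ) - 1) (2 * Real.sqrt x) * besselJ (ν : ℝ) (2 * Real.sqrt y) -
      2 * Real.sqrt y * besselJ ((ν : ℝ) - 1) (2 * Real.sqrt y) * besselJ (ν : ℝ) (2 * Real.sqrt x)) /
    ((x - y) * Real.sqrt x * Real.sqrt y)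

/-- The polynomial `𝒫(s,t,ν)`. -/
noncomputable def Ppoly (s t : ℂ) (ν : ℕ) : ℂ :=
  (1 / 4) * (t - s) * (t ^ 2 + s ^ 2 + (t + s) * ((ν : ℂ) - 1) - (ν : ℂ))

/-- The interpolating kernel `𝕊(x,y;g)` (residue-series form), for `x ≠ y`. -/
noncomputable def Sker (ν : ℕ) (g x y : ℝ) : ℂ :=
  (4 / (((x ^ 2 - y ^ 2 : ℝ) : ℂ) * (g : ℂ))) *
    ∑' k : ℕ, ∑' l : ℕ,
      ((-1 : ℂ) ^ (k + l) / ((k.factorial : ℂ) * (l.factorial : ℂ))) *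
        ((x : ℂ) ^ k * (y : ℂ) ^ (l + ν) /
          (Complex.Gamma ((k : ℂ) + ν + 1) * Complex.Gamma ((l : ℂ) + ν + 1))) *
        (Ppoly (l : ℂ) (k : ℂ) ν -
          (g : ℂ) * ((l : ℂ) ^ 2 + (k : ℂ) ^ 2 + (ν : ℂ) * l - (l : ℂ) * k)) *
        besselI (k : ℂ) (x / (2 * g)) * besselK ((l : ℂ) + ν) (y / (2 * g))

/-- The diagonal value `𝕊(x,x;g)` of the interpolating kernel. -/
noncomputable def SkerDiag (ν : ℕ) (g x : ℝ) : ℂ :=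
  (1 / ((g : ℂ) ^ 2 * (x : ℂ))) *
    ∑' k : ℕ, ∑' l : ℕ,
      ((-1 : ℂ) ^ (k + l) / ((k.factorial : ℂ) * (l.factorial : ℂ))) *
        ((x : ℂ) ^ (k + l + ν) /
          (Complex.Gamma ((k : ℂ) + ν + 1) * Complex.Gamma ((l : ℂ) + ν + 1))) *
        (Ppoly (l : ℂ) (k : ℂ) ν -
          (g : ℂ) * ((l : ℂ) ^ 2 + (k : ℂ) ^ 2 + (ν : ℂ) * l - (l : ℂ) * k)) *
        besselI ((k : ℂ) - 1) (x / (2 * g)) * besselK ((l : ℂ) + ν) (x / (2 * g))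

/-- The generalized Laguerre polynomial `L_n^{(ν)}(x)`. -/
noncomputable def laguerreL (ν n : ℕ) (x : ℝ) : ℝ :=
  ∑ k ∈ Finset.range (n + 1),
    (-1 : ℝ) ^ k * Real.Gamma ((n : ℝ) + ν + 1) /
      ((n - k).factorial * Real.Gamma ((ν : ℝ) + k + 1) * k.factorial) * x ^ k

/-- The function `A_N(s,t;μ)` from the Christoffel–Darboux analysis. -/
noncomputable def Afun (ν N : ℕ) (s t : ℂ) (μ : ℝ) : ℂ :=
  -(((1 + μ : ℝ) : ℂ) ^ 2 / 4) * (t - (N : ℂ)) * (t - (N : ℂ) + 1)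
  - (((1 + μ : ℝ) : ℂ) ^ 2 / 4) * ((ν : ℂ) + (N : ℂ) + 1) * ((N : ℂ) + 1) *
      (t - (N : ℂ)) / (s - (N : ℂ) - 1)
  - (μ : ℂ) * (3 * (N : ℂ) + (ν : ℂ)) * (t - (N : ℂ))
  - (((1 - μ : ℝ) : ℂ) ^ 2 / 2) * (2 * (N : ℂ) + (ν : ℂ)) * (t - (N : ℂ))
  + (μ : ℂ) * (N : ℂ) * (s - (N : ℂ))
  + (((1 - μ : ℝ) : ℂ) ^ 2 / 2) * (2 * (N : ℂ) + (ν : ℂ)) * (s - (N : ℂ))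
  + (((1 - μ : ℝ) : ℂ) ^ 2 / 4) * (s - (N : ℂ)) * (s - (N : ℂ) + 1)
  + (((1 - μ : ℝ) : ℂ) ^ 2 / 4) * ((N : ℂ) + 1) * ((ν : ℂ) + (N : ℂ) + 1) *
      (s - (N : ℂ)) / (t - (N : ℂ) - 1)

/-- Kummer's confluent hypergeometric function `Φ(a;b;z)`. -/
noncomputable def kummer (a b z : ℂ) : ℂ :=
  ∑' m : ℕ, poch a m / (poch b m * (m.factorial : ℂ)) * z ^ m

/-- Wright's generalized Bessel function `J_{a,b}(x)`. -/
noncomputable def wrightJ (a b x : ℝ) : ℝ :=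
  ∑' j : ℕ, (-x) ^ j / (j.factorial * Real.Gamma (a + b * j))

/-- Borodin's hard edge kernel `K^{(α,θ)}(x,y)`. -/
noncomputable def borodinK (α θ x y : ℝ) : ℝ :=
  θ * x ^ α * ∫ u in (0 : ℝ)..1,
    wrightJ ((α + 1) / θ) (1 / θ) (x * u) * wrightJ (α + 1) θ ((y * u) ^ θ) * u ^ α


noncomputable def cE00 (s t : ℂ) (ν : ℕ) : ℂ := (1/4)*t*(ν:ℂ) + (1/4)*t^2 + (-1/2)*t^2*(ν:ℂ) + (-1/2)*t^3 + (1/4)*t^3*(ν:ℂ) + (1/4)*t^4 + (-1/4)*s*(ν:ℂ) + (1/2)*s*t^2*(ν:ℂ) + (1/4)*s*t^3 + (-1/4)*s*t^3*(ν:ℂ) + (-1/4)*s*t^4 + (-1/4)*s^2 + (1/2)*s^2*(ν:ℂ) + (-1/2)*s^2*t*(ν:ℂ) + (1/4)*s^2*t^3 + (1/2)*s^3 + (-1/4)*s^3*(ν:ℂ) + (-1/4)*s^3*t + (1/4)*s^3*t*(ν:ℂ) + (-1/4)*s^3*t^2 + (-1/4)*s^4 + (1/4)*s^4*t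
noncomputable def cE01 (s t : ℂ) (ν : ℕ) : ℂ := (1/4)*t*(ν:ℂ) + (1/4)*t^2 + (-1/2)*t^2*(ν:ℂ) + (-1/2)*t^3 + (1/4)*t^3*(ν:ℂ) + (1/4)*t^4 + (-1/4)*s*(ν:ℂ) + (1/4)*s*t^2 + (-1/4)*s*t^2*(ν:ℂ) + (-1/4)*s*t^3 + (-1/4)*s^2 + (1/2)*s^2*(ν:ℂ) + (-1/4)*s^2*t + (1/4)*s^2*t*(ν:ℂ) + (1/2)*s^3 + (-1/4)*s^3*(ν:ℂ) + (1/4)*s^3*t + (-1/4)*s^4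
noncomputable def cE11 (s t : ℂ) (ν : ℕ) : ℂ := (1/2)*t*(ν:ℂ) + (-1/2)*t^2 + (-1/2)*t^2*(ν:ℂ) + (1/2)*t^3 + (-1/2)*s*(ν:ℂ) + (1)*s*t + (1)*s*t*(ν:ℂ) + (-1/2)*s*t^3 + (-1/2)*s^2 + (1/2)*s^2*(ν:ℂ) + (-1)*s^2*t*(ν:ℂ) + (1/2)*s^3 + (-1/2)*s^3*t
noncomputable def cE12 (s t : ℂ) (ν : ℕ) : ℂ := (1/2)*t*(ν:ℂ) + (-3/2)*t^2 + (-1/2)*t^2*(ν:ℂ) + (1/2)*t^3 + (-3/2)*s*(ν:ℂ) + (2)*s*t + (2)*s*t*(ν:ℂ) + (1/2)*s*t^2 + (-3/2)*s^2 + (1/2)*s^2*(ν:ℂ) + (1/2)*s^2*t + (1/2)*s^3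
noncomputable def cE13 (s t : ℂ) (ν : ℕ) : ℂ := (-1)*t^2 + (-1)*s*(ν:ℂ) + (1)*s*t + (-1)*s^2
noncomputable def cE21 (s t : ℂ) (ν : ℕ) : ℂ := (-1/4)*t*(ν:ℂ) + (-1/4)*t^2 + (1/4)*t^2*(ν:ℂ) + (1/4)*t^3 + (1/4)*s*(ν:ℂ) + (-1/2)*s*t^2*(ν:ℂ) + (-1/4)*s*t^3 + (1/4)*s^2 + (-1/4)*s^2*(ν:ℂ) + (1/2)*s^2*t*(ν:ℂ) + (-1/4)*s^3 + (1/4)*s^3*t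
noncomputable def cE22 (s t : ℂ) (ν : ℕ) : ℂ := (-1/4)*t*(ν:ℂ) + (-1/4)*t^2 + (1/4)*t^2*(ν:ℂ) + (1/4)*t^3 + (1/4)*s*(ν:ℂ) + (-1/4)*s*t^2 + (1/4)*s^2 + (-1/4)*s^2*(ν:ℂ) + (1/4)*s^2*t + (-1/4)*s^3

set_option maxHeartbeats 1000000 in
lemma Afun_identity (ν N : ℕ) (s t : ℂ) (μ : ℝ) (hN : (N:ℂ) ≠ 0)
    (hs : s - (N:ℂ) - 1 ≠ 0) (ht : t - (N:ℂ) - 1 ≠ 0) :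
    Afun ν N s t μ - Ppoly s t ν / (N:ℂ) =
      (cE00 s t ν + cE01 s t ν * (N:ℂ)
       + (μ:ℂ) * (cE11 s t ν * (N:ℂ) + cE12 s t ν * (N:ℂ)^2 + cE13 s t ν * (N:ℂ)^3)
       + (μ:ℂ)^2 * (cE21 s t ν * (N:ℂ) + cE22 s t ν * (N:ℂ)^2))
      / ((N:ℂ) * (s - (N:ℂ) - 1) * (t - (N:ℂ) - 1)) := by
  have hden : (N:ℂ) * (s - (N:ℂ) - 1) * (t - (N:ℂ) - 1) ≠ 0 := by
    exact mul_ne_zero (mul_ne_zero hN hs) ht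
  have e1 : (s - (N:ℂ) - 1)⁻¹ * (s - (N:ℂ) - 1) = 1 := inv_mul_cancel₀ hs
  have e2 : (t - (N:ℂ) - 1)⁻¹ * (t - (N:ℂ) - 1) = 1 := inv_mul_cancel₀ ht
  have e3 : ((N:ℂ))⁻¹ * (N:ℂ) = 1 := inv_mul_cancel₀ hN
  rw [eq_div_iff hden]
  unfold Afun Ppoly cE00 cE01 cE11 cE12 cE13 cE21 cE22
  push_cast
  linear_combination
    (-(((1 + (μ:ℂ)) ^ 2) / 4) * ((ν:ℂ) + (N:ℂ) + 1) * ((N:ℂ) + 1) * (t - (N:ℂ)) * (N:ℂ) *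
      (t - (N:ℂ) - 1)) * e1
    + ((((1 - (μ:ℂ)) ^ 2) / 4) * ((N:ℂ) + 1) * ((ν:ℂ) + (N:ℂ) + 1) * (s - (N:ℂ)) * (N:ℂ) *
      (s - (N:ℂ) - 1)) * e2
    + (-((1 / 4) * (t - s) * (t ^ 2 + s ^ 2 + (t + s) * ((ν:ℂ) - 1) - (ν:ℂ))) *
      ((s - (N:ℂ) - 1) * (t - (N:ℂ) - 1))) * e3


set_option maxHeartbeats 2000000 in
/-- Asymptotics of `A_N(s,t;gN^{-κ})` for `κ > 1`: it equals `𝒫(s,t,ν)/N + O(N^{-γ})`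
with `γ = min{κ,2}`. -/
theorem Afun_asymptotics_kappa_gt_one (ν : ℕ) (g : ℝ) (hg : 0 < g) (κ : ℝ) (hκ : 1 < κ)
    (s t : ℂ) :
    ∃ C > (0 : ℝ), ∃ N₀ : ℕ, ∀ N : ℕ, N₀ ≤ N →
      g * (N : ℝ) ^ (-κ) ∈ Set.Ioo (0 : ℝ) 1 ∧ s ≠ (N : ℂ) + 1 ∧ t ≠ (N : ℂ) + 1 ∧
      ‖Afun ν N s t (g * (N : ℝ) ^ (-κ)) - Ppoly s t ν / (N : ℂ)‖ ≤
        C * (N : ℝ) ^ (-(min κ 2)) := by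
  obtain ⟨M, hM⟩ := exists_nat_ge (max (g + 2) (2 * ‖s‖ + 2 + (2 * ‖t‖ + 2)))
  obtain ⟨C0, hC0⟩ : ∃ c : ℝ, c = ‖cE00 s t ν‖ + ‖cE01 s t ν‖ := ⟨_, rfl⟩
  obtain ⟨C1, hC1⟩ : ∃ c : ℝ, c = ‖cE11 s t ν‖ + ‖cE12 s t ν‖ + ‖cE13 s t ν‖ := ⟨_, rfl⟩
  obtain ⟨C2, hC2⟩ : ∃ c : ℝ, c = ‖cE21 s t ν‖ + ‖cE22 s t ν‖ := ⟨_, rfl⟩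
  have hC0n : 0 ≤ C0 := by rw [hC0]; positivity
  have hC1n : 0 ≤ C1 := by rw [hC1]; positivity
  have hC2n : 0 ≤ C2 := by rw [hC2]; positivity
  refine ⟨4 * (C0 + C1 * g + C2 * g) + 1, by positivity, M + 2, fun N hN => ?_⟩
  have hx2 : (2 : ℝ) ≤ (N : ℝ) := by
    have h : (2 : ℕ) ≤ N := by omega
    exact_mod_cast h
  have hx1 : (1 : ℝ) ≤ (N : ℝ) := by linarith
  have hx0 : (0 : ℝ) < (N : ℝ) := by linarith
  have hxM : (M : ℝ) ≤ (N : ℝ) := Nat.cast_le.mpr (by omega)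
  have hxg : g + 2 ≤ (N : ℝ) := le_trans (le_trans (le_max_left _ _) hM) hxM
  have hxst : 2 * ‖s‖ + 2 + (2 * ‖t‖ + 2) ≤ (N : ℝ) :=
    le_trans (le_trans (le_max_right _ _) hM) hxM
  have hxk0 : (0 : ℝ) < (N : ℝ) ^ (-κ) := Real.rpow_pos_of_pos hx0 _
  have hm0 : 0 < g * (N : ℝ) ^ (-κ) := mul_pos hg hxk0
  have hxk : (N : ℝ) ^ (-κ) ≤ ((N : ℝ))⁻¹ := by
    have h := Real.rpow_le_rpow_of_exponent_le hx1 (show -κ ≤ -1 by linarith)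
    rwa [Real.rpow_neg_one] at h
  have hm1 : g * (N : ℝ) ^ (-κ) < 1 := by
    have h1 : g * (N : ℝ) ^ (-κ) ≤ g * ((N : ℝ))⁻¹ := mul_le_mul_of_nonneg_left hxk hg.le
    have h2 : g * ((N : ℝ))⁻¹ < 1 := by
      rw [← div_eq_mul_inv, div_lt_one hx0]; linarith
    linarith
  have hnormN1 : ‖(N : ℂ) + 1‖ = (N : ℝ) + 1 := by
    have h : ((N : ℂ) + 1) = (((N : ℝ) + 1 : ℝ) : ℂ) := by push_cast; ring
    rw [h, Complex.norm_real]
    exact abs_of_pos (by linarith)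
  have hds : (N : ℝ) / 2 ≤ ‖s - (N : ℂ) - 1‖ := by
    have h1 : s - (N : ℂ) - 1 = s - ((N : ℂ) + 1) := by ring
    rw [h1, norm_sub_rev]
    have h2 := norm_sub_norm_le ((N : ℂ) + 1) s
    rw [hnormN1] at h2
    have := norm_nonneg t
    linarith
  have hdt : (N : ℝ) / 2 ≤ ‖t - (N : ℂ) - 1‖ := by
    have h1 : t - (N : ℂ) - 1 = t - ((N : ℂ) + 1) := by ring
    rw [h1, norm_sub_rev]
    have h2 := norm_sub_norm_le ((N : ℂ) + 1) t
    rw [hnormN1] at h2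
    have := norm_nonneg s
    linarith
  have hsne : s - (N : ℂ) - 1 ≠ 0 := by
    intro h; rw [h, norm_zero] at hds; linarith
  have htne : t - (N : ℂ) - 1 ≠ 0 := by
    intro h; rw [h, norm_zero] at hdt; linarith
  have hNne : (N : ℂ) ≠ 0 := by
    simp only [ne_eq, Nat.cast_eq_zero]; omega
  refine ⟨⟨hm0, hm1⟩, ?_, ?_, ?_⟩
  · intro h; exact hsne (by rw [h]; ring)
  · intro h; exact htne (by rw [h]; ring)
  rw [Afun_identity ν N s t (g * (N : ℝ) ^ (-κ)) hNne hsne htne, norm_div]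
  -- denominator lower bound
  have hden : (N : ℝ) ^ 3 / 4 ≤ ‖(N : ℂ) * (s - (N : ℂ) - 1) * (t - (N : ℂ) - 1)‖ := by
    rw [norm_mul, norm_mul, Complex.norm_natCast]
    calc (N : ℝ) ^ 3 / 4 = (N : ℝ) * ((N : ℝ) / 2) * ((N : ℝ) / 2) := by ring
      _ ≤ (N : ℝ) * ‖s - (N : ℂ) - 1‖ * ‖t - (N : ℂ) - 1‖ := by gcongr <;> linarith
  have hmnorm : ‖((g * (N : ℝ) ^ (-κ) : ℝ) : ℂ)‖ = g * (N : ℝ) ^ (-κ) := by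
    rw [Complex.norm_real, Real.norm_eq_abs, abs_of_pos hm0]
  have hh1 : (N : ℝ) * 1 ≤ (N : ℝ) * (N : ℝ) := mul_le_mul_of_nonneg_left hx1 hx0.le
  have hh2 : (N : ℝ) ^ 2 * 1 ≤ (N : ℝ) ^ 2 * (N : ℝ) :=
    mul_le_mul_of_nonneg_left hx1 (by positivity)
  have hx12 : (N : ℝ) ≤ (N : ℝ) ^ 2 := by nlinarith [hh1]
  have hx23 : (N : ℝ) ^ 2 ≤ (N : ℝ) ^ 3 := by nlinarith [hh2]
  have hx13 : (N : ℝ) ≤ (N : ℝ) ^ 3 := le_trans hx12 hx23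
  have n1 : ‖cE00 s t ν + cE01 s t ν * (N : ℂ)‖ ≤ C0 * (N : ℝ) := by
    calc ‖cE00 s t ν + cE01 s t ν * (N : ℂ)‖
        ≤ ‖cE00 s t ν‖ + ‖cE01 s t ν‖ * (N : ℝ) := by
          refine (norm_add_le _ _).trans ?_
          rw [norm_mul, Complex.norm_natCast]
      _ ≤ C0 * (N : ℝ) := by
          rw [hC0]; nlinarith [norm_nonneg (cE00 s t ν)]
  have n2 : ‖cE11 s t ν * (N : ℂ) + cE12 s t ν * (N : ℂ) ^ 2 + cE13 s t ν * (N : ℂ) ^ 3‖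
      ≤ C1 * (N : ℝ) ^ 3 := by
    calc ‖cE11 s t ν * (N : ℂ) + cE12 s t ν * (N : ℂ) ^ 2 + cE13 s t ν * (N : ℂ) ^ 3‖
        ≤ ‖cE11 s t ν * (N : ℂ) + cE12 s t ν * (N : ℂ) ^ 2‖ + ‖cE13 s t ν * (N : ℂ) ^ 3‖ :=
          norm_add_le _ _
      _ ≤ ‖cE11 s t ν‖ * (N : ℝ) + ‖cE12 s t ν‖ * (N : ℝ) ^ 2 + ‖cE13 s t ν‖ * (N : ℝ) ^ 3 := by
          have h := norm_add_le (cE11 s t ν * (N : ℂ)) (cE12 s t ν * (N : ℂ) ^ 2)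
          simp only [norm_mul, norm_pow, Complex.norm_natCast] at h ⊢
          linarith
      _ ≤ C1 * (N : ℝ) ^ 3 := by
          rw [hC1]
          nlinarith [norm_nonneg (cE11 s t ν), norm_nonneg (cE12 s t ν),
            mul_le_mul_of_nonneg_left hx13 (norm_nonneg (cE11 s t ν)),
            mul_le_mul_of_nonneg_left hx23 (norm_nonneg (cE12 s t ν))]
  have n3 : ‖cE21 s t ν * (N : ℂ) + cE22 s t ν * (N : ℂ) ^ 2‖ ≤ C2 * (N : ℝ) ^ 2 := by
    calc ‖cE21 s t ν * (N : ℂ) + cE22 s t ν * (N : ℂ) ^ 2‖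
        ≤ ‖cE21 s t ν‖ * (N : ℝ) + ‖cE22 s t ν‖ * (N : ℝ) ^ 2 := by
          refine (norm_add_le _ _).trans ?_
          simp only [norm_mul, norm_pow, Complex.norm_natCast]
          exact le_rfl
      _ ≤ C2 * (N : ℝ) ^ 2 := by
          rw [hC2]
          nlinarith [norm_nonneg (cE21 s t ν),
            mul_le_mul_of_nonneg_left hx12 (norm_nonneg (cE21 s t ν))]
  have hnum : ‖cE00 s t ν + cE01 s t ν * (N : ℂ)
      + ((g * (N : ℝ) ^ (-κ) : ℝ) : ℂ) * (cE11 s t ν * (N : ℂ) + cE12 s t ν * (N : ℂ) ^ 2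
          + cE13 s t ν * (N : ℂ) ^ 3)
      + ((g * (N : ℝ) ^ (-κ) : ℝ) : ℂ) ^ 2 * (cE21 s t ν * (N : ℂ) + cE22 s t ν * (N : ℂ) ^ 2)‖
      ≤ C0 * (N : ℝ) + (g * (N : ℝ) ^ (-κ)) * (C1 * (N : ℝ) ^ 3)
        + (g * (N : ℝ) ^ (-κ)) ^ 2 * (C2 * (N : ℝ) ^ 2) := by
    have h1 := norm_add_le (cE00 s t ν + cE01 s t ν * (N : ℂ)
      + ((g * (N : ℝ) ^ (-κ) : ℝ) : ℂ) * (cE11 s t ν * (N : ℂ) + cE12 s t ν * (N : ℂ) ^ 2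
          + cE13 s t ν * (N : ℂ) ^ 3))
      (((g * (N : ℝ) ^ (-κ) : ℝ) : ℂ) ^ 2 * (cE21 s t ν * (N : ℂ) + cE22 s t ν * (N : ℂ) ^ 2))
    have h2 := norm_add_le (cE00 s t ν + cE01 s t ν * (N : ℂ))
      (((g * (N : ℝ) ^ (-κ) : ℝ) : ℂ) * (cE11 s t ν * (N : ℂ) + cE12 s t ν * (N : ℂ) ^ 2
          + cE13 s t ν * (N : ℂ) ^ 3))
    simp only [norm_mul, norm_pow, hmnorm] at h1 h2
    have h3 := mul_le_mul_of_nonneg_left n2 hm0.le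
    have h4 := mul_le_mul_of_nonneg_left n3 (pow_nonneg hm0.le 2)
    nlinarith [h1, h2, h3, h4]
  refine le_trans (div_le_div₀ ?_ hnum ?_ hden) ?_
  · positivity
  · positivity
  rw [div_le_iff₀ (by positivity)]
  -- rpow facts
  have hw0 : (0 : ℝ) < (N : ℝ) ^ (-(min κ 2)) := Real.rpow_pos_of_pos hx0 _
  have hw2 : (N : ℝ) ^ (-(2 : ℝ)) ≤ (N : ℝ) ^ (-(min κ 2)) :=
    Real.rpow_le_rpow_of_exponent_le hx1 (by
      have h : min κ 2 ≤ 2 := min_le_right _ _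
      linarith)
  have hwk : (N : ℝ) ^ (-κ) ≤ (N : ℝ) ^ (-(min κ 2)) :=
    Real.rpow_le_rpow_of_exponent_le hx1 (by
      have h : min κ 2 ≤ κ := min_le_left _ _
      linarith)
  have hx2inv : (N : ℝ) ^ (-(2 : ℝ)) * (N : ℝ) ^ 2 = 1 := by
    rw [show ((2 : ℝ)) = ((2 : ℕ) : ℝ) by norm_num, Real.rpow_neg hx0.le,
      Real.rpow_natCast]
    field_simp
  have hwx2 : 1 ≤ (N : ℝ) ^ (-(min κ 2)) * (N : ℝ) ^ 2 := by
    calc (1 : ℝ) = (N : ℝ) ^ (-(2 : ℝ)) * (N : ℝ) ^ 2 := hx2inv.symm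
      _ ≤ (N : ℝ) ^ (-(min κ 2)) * (N : ℝ) ^ 2 :=
          mul_le_mul_of_nonneg_right hw2 (by positivity)
  have hmw : g * (N : ℝ) ^ (-κ) ≤ g * (N : ℝ) ^ (-(min κ 2)) :=
    mul_le_mul_of_nonneg_left hwk hg.le
  have hwx3 : (0 : ℝ) ≤ (N : ℝ) ^ (-(min κ 2)) * (N : ℝ) ^ 3 := by positivity
  have b0 : (N : ℝ) ≤ (N : ℝ) ^ (-(min κ 2)) * (N : ℝ) ^ 3 := by
    calc (N : ℝ) = 1 * (N : ℝ) := (one_mul _).symm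
      _ ≤ ((N : ℝ) ^ (-(min κ 2)) * (N : ℝ) ^ 2) * (N : ℝ) :=
          mul_le_mul_of_nonneg_right hwx2 hx0.le
      _ = (N : ℝ) ^ (-(min κ 2)) * (N : ℝ) ^ 3 := by ring
  have b1 : C0 * (N : ℝ) ≤ C0 * ((N : ℝ) ^ (-(min κ 2)) * (N : ℝ) ^ 3) :=
    mul_le_mul_of_nonneg_left b0 hC0n
  have b2 : (g * (N : ℝ) ^ (-κ)) * (C1 * (N : ℝ) ^ 3)
      ≤ (C1 * g) * ((N : ℝ) ^ (-(min κ 2)) * (N : ℝ) ^ 3) := by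
    have h := mul_le_mul_of_nonneg_right hmw
      (show (0 : ℝ) ≤ C1 * (N : ℝ) ^ 3 by positivity)
    nlinarith [h]
  have b3 : (g * (N : ℝ) ^ (-κ)) ^ 2 * (C2 * (N : ℝ) ^ 2)
      ≤ (C2 * g) * ((N : ℝ) ^ (-(min κ 2)) * (N : ℝ) ^ 3) := by
    have e1 : (g * (N : ℝ) ^ (-κ)) ^ 2 * (C2 * (N : ℝ) ^ 2)
        ≤ (g * (N : ℝ) ^ (-κ)) * (C2 * (N : ℝ) ^ 2) := by
      nlinarith [mul_le_mul_of_nonneg_right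
        (show g * (N : ℝ) ^ (-κ) * (g * (N : ℝ) ^ (-κ)) ≤ g * (N : ℝ) ^ (-κ) by nlinarith)
        (show (0 : ℝ) ≤ C2 * (N : ℝ) ^ 2 by positivity)]
    have e2 : (g * (N : ℝ) ^ (-κ)) * (C2 * (N : ℝ) ^ 2)
        ≤ (g * (N : ℝ) ^ (-(min κ 2))) * (C2 * (N : ℝ) ^ 2) :=
      mul_le_mul_of_nonneg_right hmw (by positivity)
    have e3 : (g * (N : ℝ) ^ (-(min κ 2))) * (C2 * (N : ℝ) ^ 2)
        ≤ (C2 * g) * ((N : ℝ) ^ (-(min κ 2)) * (N : ℝ) ^ 3) := by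
      nlinarith [mul_le_mul_of_nonneg_left hx23
        (show (0 : ℝ) ≤ g * (N : ℝ) ^ (-(min κ 2)) * C2 by positivity)]
    linarith
  calc C0 * (N : ℝ) + (g * (N : ℝ) ^ (-κ)) * (C1 * (N : ℝ) ^ 3)
        + (g * (N : ℝ) ^ (-κ)) ^ 2 * (C2 * (N : ℝ) ^ 2)
      ≤ C0 * ((N : ℝ) ^ (-(min κ 2)) * (N : ℝ) ^ 3)
        + (C1 * g) * ((N : ℝ) ^ (-(min κ 2)) * (N : ℝ) ^ 3)
        + (C2 * g) * ((N : ℝ) ^ (-(min κ 2)) * (N : ℝ) ^ 3) := by linarith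
    _ ≤ (4 * (C0 + C1 * g + C2 * g) + 1) * (N : ℝ) ^ (-(min κ 2)) * ((N : ℝ) ^ 3 / 4) := by
        nlinarith [hwx3, mul_le_mul_of_nonneg_left hwx3
          (show (0 : ℝ) ≤ C0 + C1 * g + C2 * g by positivity)]
end

section
/- Let ν ≥ 0 be an integer, g > 0, and let s, t be fixed complex numbers. Then there exist C > 0 and N₀ ∈ ℕ such that for all integers N ≥ N₀ (in particular g/N ∈ (0,1) and s ≠ N+1, t ≠ N+1), |A_N(s, t; g/N) − (𝒫(s,t,ν) − g(s² + t² + νs − st))/N| ≤ C/N². -/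
open Filter Topology MeasureTheory

noncomputable def cfA0 (g : ℝ) (s t : ℂ) (ν : ℕ) : ℂ :=
  (-1/4)*t*(g:ℂ)^2*(ν:ℂ) + (-1/4)*t^2*(g:ℂ)^2 + (1/4)*t^2*(g:ℂ)^2*(ν:ℂ) + (1/4)*t^3*(g:ℂ)^2 + (1/4)*s*(g:ℂ)^2*(ν:ℂ) + (-1/2)*s*t^2*(g:ℂ)^2*(ν:ℂ) + (-1/4)*s*t^3*(g:ℂ)^2 + (1/4)*s^2*(g:ℂ)^2 + (-1/4)*s^2*(g:ℂ)^2*(ν:ℂ) + (1/2)*s^2*t*(g:ℂ)^2*(ν:ℂ) + (-1/4)*s^3*(g:ℂ)^2 + (1/4)*s^3*t*(g:ℂ)^2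

noncomputable def cfA1 (g : ℝ) (s t : ℂ) (ν : ℕ) : ℂ :=
  (1/4)*t*(ν:ℂ) + (1/2)*t*(g:ℂ)*(ν:ℂ) + (-1/4)*t*(g:ℂ)^2*(ν:ℂ) + (1/4)*t^2 + (-1/2)*t^2*(ν:ℂ) + (1/2)*t^2*(g:ℂ) + (-1/2)*t^2*(g:ℂ)*(ν:ℂ) + (-1/4)*t^2*(g:ℂ)^2 + (1/4)*t^2*(g:ℂ)^2*(ν:ℂ) + (-1/2)*t^3 + (1/4)*t^3*(ν:ℂ) + (-1/2)*t^3*(g:ℂ) + (1/4)*t^3*(g:ℂ)^2 + (1/4)*t^4 + (-1/4)*s*(ν:ℂ) + (1/2)*s*(g:ℂ)*(ν:ℂ) + (1/4)*s*(g:ℂ)^2*(ν:ℂ) + (1/2)*s*t^2*(ν:ℂ) + (-1/4)*s*t^2*(g:ℂ)^2 + (1/4)*s*t^3 + (-1/4)*s*t^3*(ν:ℂ) + (1/2)*s*t^3*(g:ℂ) + (-1/4)*s*t^4 + (-1/4)*s^2 + (1/2)*s^2*(ν:ℂ) + (1/2)*s^2*(g:ℂ) + (-1/2)*s^2*(g:ℂ)*(ν:ℂ)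 + (1/4)*s^2*(g:ℂ)^2 + (-1/4)*s^2*(g:ℂ)^2*(ν:ℂ) + (-1/2)*s^2*t*(ν:ℂ) + (1/4)*s^2*t*(g:ℂ)^2 + (-1)*s^2*t^2*(g:ℂ) + (1/4)*s^2*t^3 + (1/2)*s^3 + (-1/4)*s^3*(ν:ℂ) + (-1/2)*s^3*(g:ℂ) + (-1/4)*s^3*(g:ℂ)^2 + (-1/4)*s^3*t + (1/4)*s^3*t*(ν:ℂ) + (1/2)*s^3*t*(g:ℂ) + (-1/4)*s^3*t^2 + (-1/4)*s^4 + (1/4)*s^4*t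

noncomputable def cfA2 (g : ℝ) (s t : ℂ) (ν : ℕ) : ℂ :=
  (1/4)*t*(ν:ℂ) + (1/2)*t*(g:ℂ)*(ν:ℂ) + (1/4)*t^2 + (-1/2)*t^2*(ν:ℂ) + (1/2)*t^2*(g:ℂ) + (-1/2)*t^2*(g:ℂ)*(ν:ℂ) + (-1/2)*t^3 + (1/4)*t^3*(ν:ℂ) + (-1/2)*t^3*(g:ℂ) + (1/4)*t^4 + (-1/4)*s*(ν:ℂ) + (1/2)*s*(g:ℂ)*(ν:ℂ) + (1)*s*t*(g:ℂ)*(ν:ℂ) + (1/4)*s*t^2 + (-1/4)*s*t^2*(ν:ℂ) + (1/2)*s*t^2*(g:ℂ) + (-1/4)*s*t^3 + (-1/4)*s^2 + (1/2)*s^2*(ν:ℂ) + (1/2)*s^2*(g:ℂ) + (-1/2)*s^2*(g:ℂ)*(ν:ℂ) + (-1/4)*s^2*t + (1/4)*s^2*t*(ν:ℂ) + (1/2)*s^2*t*(g:ℂ) + (1/2)*s^3 + (-1/4)*s^3*(ν:ℂ) + (-1/2)*s^3*(g:ℂ) + (1/4)*s^3*t + (-1/4)*s^4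

set_option maxHeartbeats 2000000 in
lemma Afun_rat (ν : ℕ) (g : ℝ) (s t : ℂ) (N : ℕ) (hN : (N : ℂ) ≠ 0)
    (hs : s - (N : ℂ) - 1 ≠ 0) (ht : t - (N : ℂ) - 1 ≠ 0) :
    Afun ν N s t (g / (N : ℝ)) -
        (Ppoly s t ν - (g : ℂ) * (s ^ 2 + t ^ 2 + (ν : ℂ) * s - s * t)) / (N : ℂ) =
      (cfA2 g s t ν * (N : ℂ) ^ 2 + cfA1 g s t ν * (N : ℂ) + cfA0 g s t ν) /
        ((N : ℂ) ^ 2 * (s - (N : ℂ) - 1) * (t - (N : ℂ) - 1)) := by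
  obtain ⟨d1, rfl⟩ : ∃ d, s = d + (N : ℂ) + 1 := ⟨s - (N : ℂ) - 1, by ring⟩
  obtain ⟨d2, rfl⟩ : ∃ d, t = d + (N : ℂ) + 1 := ⟨t - (N : ℂ) - 1, by ring⟩
  have hd1 : d1 ≠ 0 := fun h => hs (by rw [h]; ring)
  have hd2 : d2 ≠ 0 := fun h => ht (by rw [h]; ring)
  have e1 : d1 + (N : ℂ) + 1 - (N : ℂ) - 1 = d1 := by ring
  have e2 : d2 + (N : ℂ) + 1 - (N : ℂ) - 1 = d2 := by ring
  have hden : (N : ℂ) ^ 2 * d1 * d2 ≠ 0 := mul_ne_zero (mul_ne_zero (pow_ne_zero 2 hN) hd1) hd2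
  rw [show (N : ℂ) ^ 2 * (d1 + (N : ℂ) + 1 - (N : ℂ) - 1) * (d2 + (N : ℂ) + 1 - (N : ℂ) - 1)
      = (N : ℂ) ^ 2 * d1 * d2 by ring, eq_div_iff hden]
  unfold Afun Ppoly cfA0 cfA1 cfA2
  push_cast
  rw [e1, e2]
  linear_combination
    ((1/4)*d1*d2*d2⁻¹*(g:ℂ)^2 + (1/4)*d1*d2*d2⁻¹*(g:ℂ)^2*(ν:ℂ) + (-3/4)*d1*d2^2*(g:ℂ)^2 + (-1/2)*d1*d2^2*(g:ℂ)^2*(ν:ℂ) + (-1/4)*d1*d2^3*(g:ℂ)^2 + (-1/4)*d1*d1⁻¹*d2*(g:ℂ)^2 + (-1/4)*d1*d1⁻¹*d2*(g:ℂ)^2*(ν:ℂ) + (-1/4)*d1*d1⁻¹*d2^2*(g:ℂ)^2 + (-1/4)*d1*d1⁻¹*d2^2*(g:ℂ)^2*(ν:ℂ) + (3/4)*d1^2*d2*(g:ℂ)^2 + (1/2)*d1^2*d2*(g:ℂ)^2*(ν:ℂ) + (1/4)*d1^2*d2*d2⁻¹*(g:ℂ)^2 + (1/4)*d1^2*d2*d2⁻¹*(g:ℂ)^2*(ν:ℂ)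 + (1/4)*d1^3*d2*(g:ℂ)^2 + (-1)*(N:ℂ)*d1*d2*(g:ℂ) + (-1/2)*(N:ℂ)*d1*d2*d2⁻¹*(g:ℂ) + (-1/2)*(N:ℂ)*d1*d2*d2⁻¹*(g:ℂ)*(ν:ℂ) + (1/2)*(N:ℂ)*d1*d2*d2⁻¹*(g:ℂ)^2 + (1/4)*(N:ℂ)*d1*d2*d2⁻¹*(g:ℂ)^2*(ν:ℂ) + (-1/4)*(N:ℂ)*d1*d2^2*(ν:ℂ) + (-1/2)*(N:ℂ)*d1*d2^2*(g:ℂ) + (-1)*(N:ℂ)*d1*d2^2*(g:ℂ)^2 + (-1/4)*(N:ℂ)*d1*d2^3 + (-1/4)*(N:ℂ)*d1*d2^3*(ν:ℂ) + (1/2)*(N:ℂ)*d1*d2^3*(g:ℂ) + (-1/4)*(N:ℂ)*d1*d2^4 + (-1/2)*(N:ℂ)*d1*d1⁻¹*d2*(g:ℂ) + (-1/2)*(N:ℂ)*d1*d1⁻¹*d2*(g:ℂ)*(ν:ℂ) + (-1/2)*(N:ℂ)*d1*d1⁻¹*d2*(g:ℂ)^2 + (-1/4)*(N:ℂ)*d1*d1⁻¹*d2*(g:ℂ)^2*(ν:ℂ)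 + (-1/2)*(N:ℂ)*d1*d1⁻¹*d2^2*(g:ℂ) + (-1/2)*(N:ℂ)*d1*d1⁻¹*d2^2*(g:ℂ)*(ν:ℂ) + (-1/2)*(N:ℂ)*d1*d1⁻¹*d2^2*(g:ℂ)^2 + (-1/4)*(N:ℂ)*d1*d1⁻¹*d2^2*(g:ℂ)^2*(ν:ℂ) + (1/4)*(N:ℂ)*d1^2*d2*(ν:ℂ) + (-1/2)*(N:ℂ)*d1^2*d2*(g:ℂ) + (1)*(N:ℂ)*d1^2*d2*(g:ℂ)^2 + (-1/2)*(N:ℂ)*d1^2*d2*d2⁻¹*(g:ℂ) + (-1/2)*(N:ℂ)*d1^2*d2*d2⁻¹*(g:ℂ)*(ν:ℂ) + (1/2)*(N:ℂ)*d1^2*d2*d2⁻¹*(g:ℂ)^2 + (1/4)*(N:ℂ)*d1^2*d2*d2⁻¹*(g:ℂ)^2*(ν:ℂ) + (-1)*(N:ℂ)*d1^2*d2^2*(g:ℂ) + (1/4)*(N:ℂ)*d1^2*d2^3 + (1/4)*(N:ℂ)*d1^3*d2 + (1/4)*(N:ℂ)*d1^3*d2*(ν:ℂ) + (1/2)*(N:ℂ)*d1^3*d2*(g:ℂ)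 + (-1/4)*(N:ℂ)*d1^3*d2^2 + (1/4)*(N:ℂ)*d1^4*d2 + (1/4)*(N:ℂ)*((N:ℂ))⁻¹*d1*d2*d2⁻¹*(g:ℂ)^2 + (1/4)*(N:ℂ)*((N:ℂ))⁻¹*d1*d2*d2⁻¹*(g:ℂ)^2*(ν:ℂ) + (-3/4)*(N:ℂ)*((N:ℂ))⁻¹*d1*d2^2*(g:ℂ)^2 + (-1/2)*(N:ℂ)*((N:ℂ))⁻¹*d1*d2^2*(g:ℂ)^2*(ν:ℂ) + (-1/4)*(N:ℂ)*((N:ℂ))⁻¹*d1*d2^3*(g:ℂ)^2 + (-1/4)*(N:ℂ)*((N:ℂ))⁻¹*d1*d1⁻¹*d2*(g:ℂ)^2 + (-1/4)*(N:ℂ)*((N:ℂ))⁻¹*d1*d1⁻¹*d2*(g:ℂ)^2*(ν:ℂ) + (-1/4)*(N:ℂ)*((N:ℂ))⁻¹*d1*d1⁻¹*d2^2*(g:ℂ)^2 + (-1/4)*(N:ℂ)*((N:ℂ))⁻¹*d1*d1⁻¹*d2^2*(g:ℂ)^2*(ν:ℂ) + (3/4)*(N:ℂ)*((N:ℂ))⁻¹*d1^2*d2*(g:ℂ)^2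 + (1/2)*(N:ℂ)*((N:ℂ))⁻¹*d1^2*d2*(g:ℂ)^2*(ν:ℂ) + (1/4)*(N:ℂ)*((N:ℂ))⁻¹*d1^2*d2*d2⁻¹*(g:ℂ)^2 + (1/4)*(N:ℂ)*((N:ℂ))⁻¹*d1^2*d2*d2⁻¹*(g:ℂ)^2*(ν:ℂ) + (1/4)*(N:ℂ)*((N:ℂ))⁻¹*d1^3*d2*(g:ℂ)^2 + (1)*(N:ℂ)^2*d1*d2*(g:ℂ)*(ν:ℂ) + (-1)*(N:ℂ)^2*d1*d2*d2⁻¹*(g:ℂ) + (-1/2)*(N:ℂ)^2*d1*d2*d2⁻¹*(g:ℂ)*(ν:ℂ) + (1/4)*(N:ℂ)^2*d1*d2*d2⁻¹*(g:ℂ)^2 + (-1/2)*(N:ℂ)^2*d1*d2^2 + (-1/2)*(N:ℂ)^2*d1*d2^2*(ν:ℂ) + (-1/2)*(N:ℂ)^2*d1*d2^3 + (-1)*(N:ℂ)^2*d1*d1⁻¹*d2*(g:ℂ) + (-1/2)*(N:ℂ)^2*d1*d1⁻¹*d2*(g:ℂ)*(ν:ℂ) + (-1/4)*(N:ℂ)^2*d1*d1⁻¹*d2*(g:ℂ)^2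 + (-1)*(N:ℂ)^2*d1*d1⁻¹*d2^2*(g:ℂ) + (-1/2)*(N:ℂ)^2*d1*d1⁻¹*d2^2*(g:ℂ)*(ν:ℂ) + (-1/4)*(N:ℂ)^2*d1*d1⁻¹*d2^2*(g:ℂ)^2 + (1/2)*(N:ℂ)^2*d1^2*d2 + (1/2)*(N:ℂ)^2*d1^2*d2*(ν:ℂ) + (-1)*(N:ℂ)^2*d1^2*d2*d2⁻¹*(g:ℂ) + (-1/2)*(N:ℂ)^2*d1^2*d2*d2⁻¹*(g:ℂ)*(ν:ℂ) + (1/4)*(N:ℂ)^2*d1^2*d2*d2⁻¹*(g:ℂ)^2 + (1/2)*(N:ℂ)^2*d1^3*d2 + (1/2)*(N:ℂ)^2*((N:ℂ))⁻¹*d1*d2*d2⁻¹*(g:ℂ)^2 + (1/4)*(N:ℂ)^2*((N:ℂ))⁻¹*d1*d2*d2⁻¹*(g:ℂ)^2*(ν:ℂ) + (-1)*(N:ℂ)^2*((N:ℂ))⁻¹*d1*d2^2*(g:ℂ)^2 + (-1/2)*(N:ℂ)^2*((N:ℂ))⁻¹*d1*d1⁻¹*d2*(g:ℂ)^2 + (-1/4)*(N:ℂ)^2*((N:ℂ))⁻¹*d1*d1⁻¹*d2*(g:ℂ)^2*(ν:ℂ)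 + (-1/2)*(N:ℂ)^2*((N:ℂ))⁻¹*d1*d1⁻¹*d2^2*(g:ℂ)^2 + (-1/4)*(N:ℂ)^2*((N:ℂ))⁻¹*d1*d1⁻¹*d2^2*(g:ℂ)^2*(ν:ℂ) + (1)*(N:ℂ)^2*((N:ℂ))⁻¹*d1^2*d2*(g:ℂ)^2 + (1/2)*(N:ℂ)^2*((N:ℂ))⁻¹*d1^2*d2*d2⁻¹*(g:ℂ)^2 + (1/4)*(N:ℂ)^2*((N:ℂ))⁻¹*d1^2*d2*d2⁻¹*(g:ℂ)^2*(ν:ℂ) + (1)*(N:ℂ)^3*d1*d2*(g:ℂ) + (-1/2)*(N:ℂ)^3*d1*d2*d2⁻¹*(g:ℂ) + (-1/2)*(N:ℂ)^3*d1*d2^2 + (-1/2)*(N:ℂ)^3*d1*d1⁻¹*d2*(g:ℂ) + (-1/2)*(N:ℂ)^3*d1*d1⁻¹*d2^2*(g:ℂ) + (1/2)*(N:ℂ)^3*d1^2*d2 + (-1/2)*(N:ℂ)^3*d1^2*d2*d2⁻¹*(g:ℂ) + (1/4)*(N:ℂ)^3*((N:ℂ))⁻¹*d1*d2*d2⁻¹*(g:ℂ)^2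 + (-1/4)*(N:ℂ)^3*((N:ℂ))⁻¹*d1*d1⁻¹*d2*(g:ℂ)^2 + (-1/4)*(N:ℂ)^3*((N:ℂ))⁻¹*d1*d1⁻¹*d2^2*(g:ℂ)^2 + (1/4)*(N:ℂ)^3*((N:ℂ))⁻¹*d1^2*d2*d2⁻¹*(g:ℂ)^2) * mul_inv_cancel₀ hN +
    ((-1/4)*d2*(g:ℂ)^2 + (-1/4)*d2*(g:ℂ)^2*(ν:ℂ) + (-1/4)*d2^2*(g:ℂ)^2 + (-1/4)*d2^2*(g:ℂ)^2*(ν:ℂ) + (-1/2)*(N:ℂ)*d2*(g:ℂ) + (-1/2)*(N:ℂ)*d2*(g:ℂ)*(ν:ℂ) + (-1/2)*(N:ℂ)*d2*(g:ℂ)^2 + (-1/4)*(N:ℂ)*d2*(g:ℂ)^2*(ν:ℂ) + (-1/2)*(N:ℂ)*d2^2*(g:ℂ) + (-1/2)*(N:ℂ)*d2^2*(g:ℂ)*(ν:ℂ) + (-1/2)*(N:ℂ)*d2^2*(g:ℂ)^2 + (-1/4)*(N:ℂ)*d2^2*(g:ℂ)^2*(ν:ℂ) + (-1/4)*(N:ℂ)^2*d2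 + (-1/4)*(N:ℂ)^2*d2*(ν:ℂ) + (-1)*(N:ℂ)^2*d2*(g:ℂ) + (-1/2)*(N:ℂ)^2*d2*(g:ℂ)*(ν:ℂ) + (-1/4)*(N:ℂ)^2*d2*(g:ℂ)^2 + (-1/4)*(N:ℂ)^2*d2^2 + (-1/4)*(N:ℂ)^2*d2^2*(ν:ℂ) + (-1)*(N:ℂ)^2*d2^2*(g:ℂ) + (-1/2)*(N:ℂ)^2*d2^2*(g:ℂ)*(ν:ℂ) + (-1/4)*(N:ℂ)^2*d2^2*(g:ℂ)^2 + (-1/2)*(N:ℂ)^3*d2 + (-1/4)*(N:ℂ)^3*d2*(ν:ℂ) + (-1/2)*(N:ℂ)^3*d2*(g:ℂ) + (-1/2)*(N:ℂ)^3*d2^2 + (-1/4)*(N:ℂ)^3*d2^2*(ν:ℂ) + (-1/2)*(N:ℂ)^3*d2^2*(g:ℂ) + (-1/4)*(N:ℂ)^4*d2 + (-1/4)*(N:ℂ)^4*d2^2) * mul_inv_cancel₀ hd1 +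
    ((1/4)*d1*(g:ℂ)^2 + (1/4)*d1*(g:ℂ)^2*(ν:ℂ) + (1/4)*d1^2*(g:ℂ)^2 + (1/4)*d1^2*(g:ℂ)^2*(ν:ℂ) + (-1/2)*(N:ℂ)*d1*(g:ℂ) + (-1/2)*(N:ℂ)*d1*(g:ℂ)*(ν:ℂ) + (1/2)*(N:ℂ)*d1*(g:ℂ)^2 + (1/4)*(N:ℂ)*d1*(g:ℂ)^2*(ν:ℂ) + (-1/2)*(N:ℂ)*d1^2*(g:ℂ) + (-1/2)*(N:ℂ)*d1^2*(g:ℂ)*(ν:ℂ) + (1/2)*(N:ℂ)*d1^2*(g:ℂ)^2 + (1/4)*(N:ℂ)*d1^2*(g:ℂ)^2*(ν:ℂ) + (1/4)*(N:ℂ)^2*d1 + (1/4)*(N:ℂ)^2*d1*(ν:ℂ) + (-1)*(N:ℂ)^2*d1*(g:ℂ) + (-1/2)*(N:ℂ)^2*d1*(g:ℂ)*(ν:ℂ) + (1/4)*(N:ℂ)^2*d1*(g:ℂ)^2 + (1/4)*(N:ℂ)^2*d1^2 + (1/4)*(N:ℂ)^2*d1^2*(ν:ℂ) + (-1)*(N:ℂ)^2*d1^2*(g:ℂ)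 + (-1/2)*(N:ℂ)^2*d1^2*(g:ℂ)*(ν:ℂ) + (1/4)*(N:ℂ)^2*d1^2*(g:ℂ)^2 + (1/2)*(N:ℂ)^3*d1 + (1/4)*(N:ℂ)^3*d1*(ν:ℂ) + (-1/2)*(N:ℂ)^3*d1*(g:ℂ) + (1/2)*(N:ℂ)^3*d1^2 + (1/4)*(N:ℂ)^3*d1^2*(ν:ℂ) + (-1/2)*(N:ℂ)^3*d1^2*(g:ℂ) + (1/4)*(N:ℂ)^4*d1 + (1/4)*(N:ℂ)^4*d1^2) * mul_inv_cancel₀ hd2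


/-- Asymptotics of `A_N(s,t;g/N)`: it equals `(𝒫(s,t,ν) − g(s²+t²+νs−st))/N + O(N^{-2})`. -/
theorem Afun_asymptotics_kappa_one (ν : ℕ) (g : ℝ) (hg : 0 < g) (s t : ℂ) :
    ∃ C > (0 : ℝ), ∃ N₀ : ℕ, ∀ N : ℕ, N₀ ≤ N →
      g / (N : ℝ) ∈ Set.Ioo (0 : ℝ) 1 ∧ s ≠ (N : ℂ) + 1 ∧ t ≠ (N : ℂ) + 1 ∧
      ‖Afun ν N s t (g / (N : ℝ)) -
          (Ppoly s t ν - (g : ℂ) * (s ^ 2 + t ^ 2 + (ν : ℂ) * s - s * t)) / (N : ℂ)‖ ≤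
        C / (N : ℝ) ^ 2 := by
  set c : ℝ := ‖cfA2 g s t ν‖ + ‖cfA1 g s t ν‖ + ‖cfA0 g s t ν‖ with hc
  have hc0 : 0 ≤ c := by positivity
  refine ⟨4 * c + 1, by positivity, ⌈2 * ‖s‖ + 2 * ‖t‖ + g + 2⌉₊, fun N hN => ?_⟩
  have hNR : 2 * ‖s‖ + 2 * ‖t‖ + g + 2 ≤ (N : ℝ) :=
    le_trans (Nat.le_ceil _) (by exact_mod_cast hN)
  have hs0 : 0 ≤ ‖s‖ := norm_nonneg s
  have ht0 : 0 ≤ ‖t‖ := norm_nonneg t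
  have hN2 : (2 : ℝ) ≤ (N : ℝ) := by linarith
  have hNpos : (0 : ℝ) < (N : ℝ) := by linarith
  have hNne : N ≠ 0 := by
    intro h; rw [h] at hN2; norm_num at hN2
  have hNc : (N : ℂ) ≠ 0 := Nat.cast_ne_zero.mpr hNne
  have hnormN1 : ‖(N : ℂ) + 1‖ = (N : ℝ) + 1 := by
    rw [show (N : ℂ) + 1 = ((N + 1 : ℕ) : ℂ) by push_cast; ring, Complex.norm_natCast]
    push_cast; ring
  have hsne : s ≠ (N : ℂ) + 1 := by
    intro h
    have : ‖s‖ = (N : ℝ) + 1 := by rw [h, hnormN1]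
    linarith
  have htne : t ≠ (N : ℂ) + 1 := by
    intro h
    have : ‖t‖ = (N : ℝ) + 1 := by rw [h, hnormN1]
    linarith
  have hd1 : s - (N : ℂ) - 1 ≠ 0 := by
    intro h; exact hsne (by linear_combination h)
  have hd2 : t - (N : ℂ) - 1 ≠ 0 := by
    intro h; exact htne (by linear_combination h)
  have hlb1 : (N : ℝ) / 2 ≤ ‖s - (N : ℂ) - 1‖ := by
    have h1 : ‖(N : ℂ) + 1‖ - ‖s‖ ≤ ‖(N : ℂ) + 1 - s‖ := norm_sub_norm_le _ _
    have h2 : s - (N : ℂ) - 1 = -((N : ℂ) + 1 - s) := by ring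
    rw [h2, norm_neg]
    rw [hnormN1] at h1
    linarith
  have hlb2 : (N : ℝ) / 2 ≤ ‖t - (N : ℂ) - 1‖ := by
    have h1 : ‖(N : ℂ) + 1‖ - ‖t‖ ≤ ‖(N : ℂ) + 1 - t‖ := norm_sub_norm_le _ _
    have h2 : t - (N : ℂ) - 1 = -((N : ℂ) + 1 - t) := by ring
    rw [h2, norm_neg]
    rw [hnormN1] at h1
    linarith
  refine ⟨⟨by positivity, by rw [div_lt_one hNpos]; linarith⟩, hsne, htne, ?_⟩
  rw [Afun_rat ν g s t N hNc hd1 hd2, norm_div]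
  have hnum : ‖cfA2 g s t ν * (N : ℂ) ^ 2 + cfA1 g s t ν * (N : ℂ) + cfA0 g s t ν‖ ≤
      c * (N : ℝ) ^ 2 := by
    have b1 : ‖cfA2 g s t ν * (N : ℂ) ^ 2 + cfA1 g s t ν * (N : ℂ) + cfA0 g s t ν‖ ≤
        ‖cfA2 g s t ν‖ * (N : ℝ) ^ 2 + ‖cfA1 g s t ν‖ * (N : ℝ) + ‖cfA0 g s t ν‖ := by
      refine le_trans (norm_add_le _ _) ?_
      gcongr
      refine le_trans (norm_add_le _ _) ?_
      gcongr <;> simp [norm_mul, norm_pow, Complex.norm_natCast]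
    have e1 : (N : ℝ) ≤ (N : ℝ) ^ 2 := by nlinarith
    have e2 : (1 : ℝ) ≤ (N : ℝ) ^ 2 := by nlinarith
    have b2 : ‖cfA1 g s t ν‖ * (N : ℝ) ≤ ‖cfA1 g s t ν‖ * (N : ℝ) ^ 2 := by
      gcongr
    have b3 : ‖cfA0 g s t ν‖ = ‖cfA0 g s t ν‖ * 1 := by ring
    have b4 : ‖cfA0 g s t ν‖ * 1 ≤ ‖cfA0 g s t ν‖ * (N : ℝ) ^ 2 := by gcongr
    rw [hc]
    nlinarith
  have hden : (N : ℝ) ^ 2 * ((N : ℝ) / 2) * ((N : ℝ) / 2) ≤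
      ‖(N : ℂ) ^ 2 * (s - (N : ℂ) - 1) * (t - (N : ℂ) - 1)‖ := by
    rw [norm_mul, norm_mul, norm_pow, Complex.norm_natCast]
    exact mul_le_mul (mul_le_mul le_rfl hlb1 (by positivity) (by positivity)) hlb2
      (by positivity) (by positivity)
  have hdenpos : (0 : ℝ) < (N : ℝ) ^ 2 * ((N : ℝ) / 2) * ((N : ℝ) / 2) := by positivity
  calc ‖cfA2 g s t ν * (N : ℂ) ^ 2 + cfA1 g s t ν * (N : ℂ) + cfA0 g s t ν‖ /
        ‖(N : ℂ) ^ 2 * (s - (N : ℂ) - 1) * (t - (N : ℂ) - 1)‖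
      ≤ (c * (N : ℝ) ^ 2) / ((N : ℝ) ^ 2 * ((N : ℝ) / 2) * ((N : ℝ) / 2)) := by
        exact div_le_div₀ (by positivity) hnum hdenpos hden
    _ = 4 * c / (N : ℝ) ^ 2 := by field_simp; ring
    _ ≤ (4 * c + 1) / (N : ℝ) ^ 2 := by gcongr; linarith
end

section
/- Let ν ≥ 0 be an integer and x > 0 fixed. Define Φ_1(x;g) = −∑_{k=0}^∞ ((−1)^k x^k/(k! Γ(k+ν+1))) I_k(x/(2g)) for g > 0 (the residue-series form of (1/2πi)∮_Σ Γ(−t) x^t I_t(x/(2g))/Γ(t+ν+1) dt). Then lim_{g→+∞} Φ_1(x;g) = −1/Γ(ν+1). Moreover, with φ(x;g) = −∑_{k=0}^∞ ((−1)^k x^{2k}/((k!)² Γ(k+ν+1) (4g)^k)), one has lim_{g→+∞} (Φ_1(x;g) − φ(x;g)) = 0. -/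
open Filter Topology MeasureTheory

/-! As `g → ∞` the Bessel argument `x / (2g)` tends to `0`, and `I_k(z) → 0^k / k!` as `z → 0`,
so only `I_0` survives, with limit `1`. Since `|I_k(z)| ≤ |z/2|^k e^{(z/2)^2} ≤ e` for `|z| ≤ 2`,
uniformly in `k`, and the coefficients `x^k / (k! Γ(k+ν+1))` are absolutely summable, Tannery's
theorem (dominated convergence for series) gives `Φ₁(x;g) → -1/Γ(ν+1)`. The series `φ(x;g)` is a
power series in `1/(4g)` with the same constant term, hence has the same limit. -/

open Nat

theorem tendsto_tsum_mul_pow_nhds_zero {𝕜 : Type*} [NormedField 𝕜] [CompleteSpace 𝕜]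
    {a : ℕ → 𝕜} (ha : Summable fun k => ‖a k‖) :
    Tendsto (fun w => ∑' k, a k * w ^ k) (𝓝 0) (𝓝 (a 0)) := by
  have hlim (k : ℕ) : Tendsto (fun w : 𝕜 => a k * w ^ k) (𝓝 0) (𝓝 (a k * 0 ^ k)) :=
    ((continuous_pow k).tendsto 0).const_mul (a k)
  have hbound : ∀ᶠ w in 𝓝 (0 : 𝕜), ∀ k, ‖a k * w ^ k‖ ≤ ‖a k‖ := by
    filter_upwards [Metric.closedBall_mem_nhds (0 : 𝕜) one_pos] with w hw k
    rw [norm_mul, norm_pow]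
    exact mul_le_of_le_one_right (norm_nonneg _)
      (pow_le_one₀ (norm_nonneg _) (mem_closedBall_zero_iff.mp hw))
  have hsum : ∑' k, a k * 0 ^ k = a 0 := by
    rw [tsum_eq_single 0 fun k hk => by rw [zero_pow hk, mul_zero], pow_zero, mul_one]
  simpa only [hsum] using tendsto_tsum_of_dominated_convergence ha hlim hbound

theorem Complex.Gamma_natCast_add_natCast_add_one (k n : ℕ) :
    Complex.Gamma (k + n + 1) = (k + n)! := by
  exact_mod_cast Complex.Gamma_nat_eq_factorial (k + n)

theorem one_le_norm_Gamma_natCast_add_natCast_add_one (k n : ℕ) :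
    1 ≤ ‖Complex.Gamma (k + n + 1)‖ := by
  rw [Complex.Gamma_natCast_add_natCast_add_one, Complex.norm_natCast]
  exact_mod_cast (k + n).factorial_pos

theorem besselI_natCast (k : ℕ) (z : ℝ) :
    besselI k z = ∑' m : ℕ, ((z / 2 : ℝ) : ℂ) ^ (2 * m + k) / (m ! * (k + m)! : ℂ) := by
  refine tsum_congr fun m => ?_
  rw [Complex.Gamma_natCast_add_natCast_add_one,
    show 2 * (m : ℂ) + k = (2 * m + k : ℕ) by push_cast; rfl, Complex.cpow_natCast]
  ring

theorem norm_besselI_natCast_le (k : ℕ) (z : ℝ) :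
    ‖besselI k z‖ ≤ |z / 2| ^ k * Real.exp ((z / 2) ^ 2) := by
  rw [besselI_natCast, Real.exp_eq_exp_ℝ]
  refine tsum_of_norm_bounded
    ((NormedSpace.expSeries_div_hasSum_exp ((z / 2) ^ 2)).mul_left (|z / 2| ^ k)) fun m => ?_
  have hfac : (m ! : ℝ) ≤ m ! * (k + m)! :=
    le_mul_of_one_le_right (by positivity) (mod_cast (k + m).factorial_pos)
  rw [norm_div, norm_pow, Complex.norm_real, norm_mul, Complex.norm_natCast,
    Complex.norm_natCast, Real.norm_eq_abs, pow_add, pow_mul, sq_abs, mul_comm, mul_div_assoc]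
  gcongr

theorem tendsto_besselI_natCast_nhds_zero (k : ℕ) :
    Tendsto (besselI k) (𝓝 0) (𝓝 ((0 : ℂ) ^ k / k !)) := by
  set a : ℕ → ℂ := fun m => (m ! * (k + m)! : ℂ)⁻¹
  have ha : Summable fun m => ‖a m‖ := by
    refine (Real.summable_pow_div_factorial 1).of_nonneg_of_le (fun _ => norm_nonneg _) fun m => ?_
    have hfac : (m ! : ℝ) ≤ m ! * (k + m)! :=
      le_mul_of_one_le_right (by positivity) (mod_cast (k + m).factorial_pos)
    rw [one_pow, one_div, norm_inv, norm_mul, Complex.norm_natCast, Complex.norm_natCast]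
    gcongr
  have hw : Tendsto (fun z : ℝ => ((z / 2 : ℝ) : ℂ)) (𝓝 0) (𝓝 0) :=
    (Complex.continuous_ofReal.comp (continuous_id.div_const 2)).tendsto' 0 0 (by simp)
  have hI : besselI k =
      fun z => ((z / 2 : ℝ) : ℂ) ^ k * ∑' m, a m * (((z / 2 : ℝ) : ℂ) ^ 2) ^ m := by
    ext z
    rw [besselI_natCast, ← tsum_mul_left]
    exact tsum_congr fun m => by ring
  have hlim : (0 : ℂ) ^ k / k ! = 0 ^ k * a 0 := by simp [a, div_eq_mul_inv]
  rw [hI, hlim]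
  exact (hw.pow k).mul ((tendsto_tsum_mul_pow_nhds_zero ha).comp (by simpa using hw.pow 2))

theorem tendsto_tsum_mul_besselI_natCast_nhds_zero {c : ℕ → ℂ} (hc : Summable fun k => ‖c k‖) :
    Tendsto (fun z => ∑' k, c k * besselI k z) (𝓝 0) (𝓝 (c 0)) := by
  have hlim (k : ℕ) : Tendsto (fun z => c k * besselI k z) (𝓝 0) (𝓝 (c k * (0 ^ k / k !))) :=
    (tendsto_besselI_natCast_nhds_zero k).const_mul (c k)
  have hbound : ∀ᶠ z in 𝓝 (0 : ℝ), ∀ k, ‖c k * besselI k z‖ ≤ ‖c k‖ * Real.exp 1 := by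
    filter_upwards [Metric.closedBall_mem_nhds (0 : ℝ) two_pos] with z hz_ball k
    have hz : |z / 2| ≤ 1 := by
      rw [abs_div, abs_two, div_le_one two_pos]
      simpa using hz_ball
    rw [norm_mul]
    gcongr
    calc ‖besselI k z‖ ≤ |z / 2| ^ k * Real.exp ((z / 2) ^ 2) := norm_besselI_natCast_le k z
      _ ≤ 1 * Real.exp 1 := by
        gcongr
        · exact pow_le_one₀ (abs_nonneg _) hz
        · rw [← sq_abs]
          exact pow_le_one₀ (abs_nonneg _) hz
      _ = Real.exp 1 := one_mul _
  have hsum : ∑' k, c k * (0 ^ k / k !) = c 0 := by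
    rw [tsum_eq_single 0 fun k hk => by rw [zero_pow hk, zero_div, mul_zero]]
    simp
  simpa only [hsum] using tendsto_tsum_of_dominated_convergence (hc.mul_right _) hlim hbound

theorem summable_norm_neg_one_pow_mul_pow_div {y : ℂ} {d : ℕ → ℂ} (hd : ∀ k, (k ! : ℝ) ≤ ‖d k‖) :
    Summable fun k => ‖(-1) ^ k * y ^ k / d k‖ := by
  refine (Real.summable_pow_div_factorial ‖y‖).of_nonneg_of_le (fun _ => norm_nonneg _) fun k => ?_
  rw [norm_div, norm_mul, norm_pow, norm_pow, norm_neg, norm_one, one_pow, one_mul]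
  gcongr
  exact hd k

theorem Phi1_large_g_limit_general (ν : ℕ) (x : ℝ) :
    Tendsto (fun g : ℝ =>
        -(∑' k : ℕ, ((-1 : ℂ) ^ k * (x : ℂ) ^ k /
            ((k.factorial : ℂ) * Complex.Gamma ((k : ℂ) + ν + 1))) *
          besselI (k : ℂ) (x / (2 * g))))
      atTop (𝓝 (-(1 / Complex.Gamma ((ν : ℂ) + 1)))) ∧
    Tendsto (fun g : ℝ =>
        (-(∑' k : ℕ, ((-1 : ℂ) ^ k * (x : ℂ) ^ k /
              ((k.factorial : ℂ) * Complex.Gamma ((k : ℂ) + ν + 1))) *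
            besselI (k : ℂ) (x / (2 * g)))) -
          (-(∑' k : ℕ, (-1 : ℂ) ^ k * (x : ℂ) ^ (2 * k) /
              ((k.factorial : ℂ) ^ 2 * Complex.Gamma ((k : ℂ) + ν + 1) *
                ((4 * g : ℝ) : ℂ) ^ k))))
      atTop (𝓝 0) := by
  have hc := summable_norm_neg_one_pow_mul_pow_div (y := x)
    (d := fun k => k ! * Complex.Gamma (k + ν + 1)) fun k => by
      rw [norm_mul, Complex.norm_natCast]
      exact le_mul_of_one_le_right (by positivity)
        (one_le_norm_Gamma_natCast_add_natCast_add_one k ν)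
  have ha := summable_norm_neg_one_pow_mul_pow_div (y := (x : ℂ) ^ 2)
    (d := fun k => (k ! : ℂ) ^ 2 * Complex.Gamma (k + ν + 1)) fun k => by
      rw [norm_mul, norm_pow, Complex.norm_natCast]
      calc (k ! : ℝ) ≤ k ! ^ 2 := le_self_pow₀ (mod_cast k.factorial_pos) two_ne_zero
        _ ≤ _ := le_mul_of_one_le_right (by positivity)
          (one_le_norm_Gamma_natCast_add_natCast_add_one k ν)
  have hz : Tendsto (fun g : ℝ => x / (2 * g)) atTop (𝓝 0) :=
    tendsto_const_nhds.div_atTop (tendsto_id.const_mul_atTop two_pos)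
  have hw : Tendsto (fun g : ℝ => ((4 * g : ℝ) : ℂ)⁻¹) atTop (𝓝 0) := by
    simpa [Function.comp_def] using (Complex.continuous_ofReal.tendsto 0).comp
      (tendsto_inv_atTop_zero.comp (tendsto_id.const_mul_atTop four_pos))
  have hΦ := ((tendsto_tsum_mul_besselI_natCast_nhds_zero hc).comp hz).neg
  have hφ := ((tendsto_tsum_mul_pow_nhds_zero ha).comp hw).neg
  have hterm (g : ℝ) (k : ℕ) :
      (-1 : ℂ) ^ k * ((x : ℂ) ^ 2) ^ k / ((k ! : ℂ) ^ 2 * Complex.Gamma (k + ν + 1)) *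
          ((4 * g : ℝ) : ℂ)⁻¹ ^ k =
        (-1) ^ k * (x : ℂ) ^ (2 * k) /
          ((k ! : ℂ) ^ 2 * Complex.Gamma (k + ν + 1) * ((4 * g : ℝ) : ℂ) ^ k) := by
    rw [pow_mul]
    ring
  simp only [Function.comp_def, hterm, pow_zero, factorial_zero, Nat.cast_one, one_pow, one_mul,
    CharP.cast_eq_zero, zero_add] at hΦ hφ
  exact ⟨hΦ, by simpa using hΦ.sub hφ⟩

/-- Large-`g` asymptotics of `Φ₁(x;g)`. -/
theorem Phi1_large_g_limit (ν : ℕ) (x : ℝ) (hx : 0 < x) :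
    Tendsto (fun g : ℝ =>
        -(∑' k : ℕ, ((-1 : ℂ) ^ k * (x : ℂ) ^ k /
            ((k.factorial : ℂ) * Complex.Gamma ((k : ℂ) + ν + 1))) *
          besselI (k : ℂ) (x / (2 * g))))
      atTop (𝓝 (-(1 / Complex.Gamma ((ν : ℂ) + 1)))) ∧
    Tendsto (fun g : ℝ =>
        (-(∑' k : ℕ, ((-1 : ℂ) ^ k * (x : ℂ) ^ k /
              ((k.factorial : ℂ) * Complex.Gamma ((k : ℂ) + ν + 1))) *
            besselI (k : ℂ) (x / (2 * g)))) -
          (-(∑' k : ℕ, (-1 : ℂ) ^ k * (x : ℂ) ^ (2 * k) /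
              ((k.factorial : ℂ) ^ 2 * Complex.Gamma ((k : ℂ) + ν + 1) *
                ((4 * g : ℝ) : ℂ) ^ k))))
      atTop (𝓝 0) :=
  Phi1_large_g_limit_general ν x
end

section
/- Let A > 0, B > 0, ν > 0, and c > 0 be real numbers. For n ∈ ℕ and complex z, set f_n(z) = ((−1)^n B^n/(n! Γ(1+ν+n))) Γ(z+ν+n) Γ(z) A^z, where A^z = exp(z log A) and Γ is the complex Gamma function. Then for each y ∈ ℝ the series ∑_{n=0}^∞ f_n(c+iy) converges, the function y ↦ ∑_{n=0}^∞ f_n(c+iy) is integrable on ℝ, each function y ↦ f_n(c+iy) is integrable on ℝ, the series ∑_{n=0}^∞ ∫_ℝ f_n(c+iy) dy converges, and ∫_ℝ (∑_{n=0}^∞ f_n(c+iy)) dy = ∑_{n=0}^∞ (∫_ℝ f_n(c+iy) dy). -/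
open Filter Topology MeasureTheory

/-- The function `f_n(z) = ((−1)^n Bⁿ/(n! Γ(1+ν+n))) Γ(z+ν+n) Γ(z) A^z`. -/
noncomputable def fB (A B ν : ℝ) (n : ℕ) (z : ℂ) : ℂ :=
  ((-1 : ℂ) ^ n * (B : ℂ) ^ n / ((n.factorial : ℂ) * Complex.Gamma (1 + (ν : ℂ) + n))) *
    Complex.Gamma (z + ν + n) * Complex.Gamma z * Complex.exp (z * (Real.log A : ℂ))

/-!
On the line `Re z = c` one has `‖Γ(z + ν + n)‖ ≤ Γ(c + ν + n)`, and three steps of the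
functional equation give `‖Γ(z)‖ ≤ Γ(c + 3) / (c (1 + y²))`. The quotients
`Γ(c + ν + n) / Γ(1 + ν + n)` grow at most geometrically, so
`‖f_n(c + iy)‖ ≤ C (|B| K)ⁿ / n! · (1 + y²)⁻¹`: a summable sequence times an integrable
function. Dominated convergence for series then gives every claim.
-/

namespace Complex

lemma norm_Gamma_le_Gamma_re {z : ℂ} (hz : 0 < z.re) : ‖Gamma z‖ ≤ Real.Gamma z.re := by
  rw [Gamma_eq_integral hz, Real.Gamma_eq_integral hz, GammaIntegral]
  refine (norm_integral_le_integral_norm _).trans_eq ?_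
  refine setIntegral_congr_fun measurableSet_Ioi fun x hx => ?_
  rw [norm_mul, norm_real, Real.norm_eq_abs, abs_of_nonneg (Real.exp_pos _).le,
    norm_cpow_eq_rpow_re_of_pos hx]
  simp

lemma norm_Gamma_mul_le {z : ℂ} (hz : 0 < z.re) :
    ‖Gamma z‖ * (z.re * (1 + z.im ^ 2)) ≤ Real.Gamma (z.re + 3) := by
  have hGamma : Gamma (z + 3) = z * (z + 1) * (z + 2) * Gamma z := by
    rw [show z + 3 = z + 2 + 1 by ring, Gamma_add_one _ (ne_zero_of_re_pos (by simp; linarith)),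
      show z + 2 = z + 1 + 1 by ring, Gamma_add_one _ (ne_zero_of_re_pos (by simp; linarith)),
      Gamma_add_one _ (ne_zero_of_re_pos hz)]
    ring
  have hsq : ∀ k : ℝ, ‖z + k‖ ^ 2 = (z.re + k) ^ 2 + z.im ^ 2 := fun k => by
    rw [Complex.sq_norm, normSq_apply]
    simp only [add_re, ofReal_re, add_im, ofReal_im, add_zero]
    ring
  have h12 : ‖z + 1‖ ≤ ‖z + 2‖ := by
    refine (pow_le_pow_iff_left₀ (norm_nonneg _) (norm_nonneg _) two_ne_zero).1 ?_
    have h1 := hsq 1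
    have h2 := hsq 2
    push_cast at h1 h2
    nlinarith
  have hprod : 1 + z.im ^ 2 ≤ ‖z + 1‖ * ‖z + 2‖ := by
    have h1 := hsq 1
    push_cast at h1
    nlinarith [norm_nonneg (z + 1)]
  have hre3 : (z + 3).re = z.re + 3 := by simp
  calc ‖Gamma z‖ * (z.re * (1 + z.im ^ 2))
      ≤ ‖Gamma z‖ * (‖z‖ * (‖z + 1‖ * ‖z + 2‖)) := by
        gcongr
        exact re_le_norm z
    _ = ‖Gamma (z + 3)‖ := by rw [hGamma, norm_mul, norm_mul, norm_mul]; ring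
    _ ≤ Real.Gamma (z.re + 3) := hre3 ▸ norm_Gamma_le_Gamma_re (by rw [hre3]; linarith)

lemma continuous_Gamma_comp {f : ℝ → ℂ} (hf : Continuous f) (hre : ∀ y, 0 < (f y).re) :
    Continuous fun y => Gamma (f y) := by
  refine continuous_iff_continuousAt.2 fun y => ContinuousAt.comp ?_ hf.continuousAt
  refine (differentiableAt_Gamma _ fun m hm => ?_).continuousAt
  have := hre y
  rw [hm, neg_re, natCast_re] at this
  linarith [m.cast_nonneg (α := ℝ)]

end Complex

lemma Real.Gamma_add_nat_div_le {a b : ℝ} (ha : 0 < a) (hb : 0 < b) (n : ℕ) :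
    Real.Gamma (a + n) / Real.Gamma (b + n) ≤
      max 1 (a / b) ^ n * (Real.Gamma a / Real.Gamma b) := by
  induction n with
  | zero => simp
  | succ n ih =>
    have han : 0 < a + n := by positivity
    have hbn : 0 < b + n := by positivity
    have hratio : (a + n) / (b + n) ≤ max 1 (a / b) := by
      rw [div_le_iff₀ hbn]
      have h1 := le_max_left 1 (a / b)
      have h2 : a ≤ max 1 (a / b) * b := (div_le_iff₀ hb).1 (le_max_right 1 (a / b))
      nlinarith [n.cast_nonneg (α := ℝ)]
    calc Real.Gamma (a + (n + 1 : ℕ)) / Real.Gamma (b + (n + 1 : ℕ))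
        = (a + n) / (b + n) * (Real.Gamma (a + n) / Real.Gamma (b + n)) := by
          push_cast
          rw [← add_assoc, ← add_assoc, Real.Gamma_add_one han.ne', Real.Gamma_add_one hbn.ne']
          field_simp
      _ ≤ max 1 (a / b) * (max 1 (a / b) ^ n * (Real.Gamma a / Real.Gamma b)) := by
          gcongr
      _ = max 1 (a / b) ^ (n + 1) * (Real.Gamma a / Real.Gamma b) := by ring

section SeriesOfIntegrals

variable {α E : Type*} [NormedAddCommGroup E] [CompleteSpace E] {f : ℕ → α → E} {M : ℕ → ℝ}
  {g : α → ℝ}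

lemma summable_of_norm_le_mul (hM : Summable M) (hfg : ∀ n x, ‖f n x‖ ≤ M n * g x) (x : α) :
    Summable fun n => f n x :=
  .of_norm_bounded (hM.mul_right (g x)) fun n => hfg n x

variable [MeasurableSpace α] {μ : Measure α}

lemma integrable_tsum_of_norm_le_mul (hf : ∀ n, AEStronglyMeasurable (f n) μ)
    (hM : Summable M) (hg : Integrable g μ) (hfg : ∀ n x, ‖f n x‖ ≤ M n * g x) :
    Integrable (fun x => ∑' n, f n x) μ := by
  have hmeas : AEStronglyMeasurable (fun x => ∑' n, f n x) μ :=
    aestronglyMeasurable_of_tendsto_ae atTop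
      (fun N => Finset.aestronglyMeasurable_fun_sum (Finset.range N) fun n _ => hf n)
      (ae_of_all _ fun x => (summable_of_norm_le_mul hM hfg x).hasSum.tendsto_sum_nat)
  refine (hg.const_mul (∑' n, M n)).mono' hmeas (ae_of_all _ fun x => ?_)
  exact tsum_of_norm_bounded (hM.hasSum.mul_right (g x)) fun n => hfg n x

lemma hasSum_integral_of_norm_le_mul [NormedSpace ℝ E] (hf : ∀ n, AEStronglyMeasurable (f n) μ)
    (hM : Summable M) (hg : Integrable g μ) (hfg : ∀ n x, ‖f n x‖ ≤ M n * g x) :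
    HasSum (fun n => ∫ x, f n x ∂μ) (∫ x, ∑' n, f n x ∂μ) :=
  hasSum_integral_of_dominated_convergence (fun n x => M n * g x) hf
    (fun n => ae_of_all _ (hfg n)) (ae_of_all _ fun x => hM.mul_right (g x))
    (by simpa only [tsum_mul_right] using hg.const_mul (∑' n, M n))
    (ae_of_all _ fun x => (summable_of_norm_le_mul hM hfg x).hasSum)

end SeriesOfIntegrals

section fB

variable {A B ν c : ℝ}

lemma norm_fB (n : ℕ) (z : ℂ) :
    ‖fB A B ν n z‖ = |B| ^ n / (n.factorial * |Real.Gamma (1 + ν + n)|) *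
      ‖Complex.Gamma (z + ν + n)‖ * ‖Complex.Gamma z‖ * Real.exp (z.re * Real.log A) := by
  have hGamma : Complex.Gamma (1 + ν + n) = (Real.Gamma (1 + ν + n) : ℂ) := by
    rw [← Complex.Gamma_ofReal]
    push_cast
    rfl
  simp [fB, hGamma, Complex.norm_exp]

lemma continuous_fB_line (hν : 0 < ν) (hc : 0 < c) (n : ℕ) :
    Continuous fun y : ℝ => fB A B ν n (c + y * Complex.I) := by
  refine ((continuous_const.mul (Complex.continuous_Gamma_comp (by fun_prop) fun y => ?_)).mul
    (Complex.continuous_Gamma_comp (by fun_prop) fun y => ?_)).mul (by fun_prop)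
  · simpa using (by positivity : 0 < c + ν + n)
  · simpa using hc

lemma exists_summable_norm_fB_le (A B : ℝ) (hν : 0 < ν) (hc : 0 < c) :
    ∃ M : ℕ → ℝ, Summable M ∧
      ∀ n (y : ℝ), ‖fB A B ν n (c + y * Complex.I)‖ ≤ M n * (1 + y ^ 2)⁻¹ := by
  set K := max 1 ((c + ν) / (1 + ν))
  set C := Real.Gamma (c + ν) / Real.Gamma (1 + ν) * (Real.Gamma (c + 3) / c) *
    Real.exp (c * Real.log A)
  refine ⟨fun n => C * ((|B| * K) ^ n / n.factorial),
    (Real.summable_pow_div_factorial _).mul_left C, fun n y => ?_⟩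
  set z : ℂ := c + y * Complex.I
  have hre : z.re = c := by simp [z]
  have him : z.im = y := by simp [z]
  have hGamma_shift : ‖Complex.Gamma (z + ν + n)‖ / Real.Gamma (1 + ν + n) ≤
      K ^ n * (Real.Gamma (c + ν) / Real.Gamma (1 + ν)) := by
    have hre' : (z + ν + n).re = c + ν + n := by simp [hre]
    have hnorm := hre' ▸ Complex.norm_Gamma_le_Gamma_re (by rw [hre']; positivity)
    exact (div_le_div_of_nonneg_right hnorm (Real.Gamma_pos_of_pos (by positivity)).le).trans
      (Real.Gamma_add_nat_div_le (by positivity) (by positivity) n)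
  have hGamma_line : ‖Complex.Gamma z‖ ≤ Real.Gamma (c + 3) / (c * (1 + y ^ 2)) := by
    rw [le_div_iff₀ (by positivity)]
    have := Complex.norm_Gamma_mul_le (z := z) (by rw [hre]; exact hc)
    rwa [hre, him] at this
  rw [norm_fB, hre, abs_of_pos (Real.Gamma_pos_of_pos (by positivity))]
  calc |B| ^ n / (n.factorial * Real.Gamma (1 + ν + n)) * ‖Complex.Gamma (z + ν + n)‖ *
        ‖Complex.Gamma z‖ * Real.exp (c * Real.log A)
      = |B| ^ n / n.factorial * (‖Complex.Gamma (z + ν + n)‖ / Real.Gamma (1 + ν + n)) *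
        ‖Complex.Gamma z‖ * Real.exp (c * Real.log A) := by ring
    _ ≤ |B| ^ n / n.factorial * (K ^ n * (Real.Gamma (c + ν) / Real.Gamma (1 + ν))) *
        (Real.Gamma (c + 3) / (c * (1 + y ^ 2))) * Real.exp (c * Real.log A) := by
        gcongr
    _ = C * ((|B| * K) ^ n / n.factorial) * (1 + y ^ 2)⁻¹ := by
        simp only [C, mul_pow]
        field_simp

end fB

theorem sum_integral_interchange_general (A B ν c : ℝ) (hν : 0 < ν) (hc : 0 < c) :
    (∀ y : ℝ, Summable (fun n : ℕ => fB A B ν n ((c : ℂ) + y * Complex.I))) ∧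
    Integrable (fun y : ℝ => ∑' n : ℕ, fB A B ν n ((c : ℂ) + y * Complex.I)) ∧
    (∀ n : ℕ, Integrable (fun y : ℝ => fB A B ν n ((c : ℂ) + y * Complex.I))) ∧
    Summable (fun n : ℕ => ∫ y : ℝ, fB A B ν n ((c : ℂ) + y * Complex.I)) ∧
    (∫ y : ℝ, ∑' n : ℕ, fB A B ν n ((c : ℂ) + y * Complex.I)) =
      ∑' n : ℕ, ∫ y : ℝ, fB A B ν n ((c : ℂ) + y * Complex.I) := by
  obtain ⟨M, hM, hfM⟩ := exists_summable_norm_fB_le A B hν hc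
  have hmeas : ∀ n, AEStronglyMeasurable (fun y : ℝ => fB A B ν n (c + y * Complex.I)) volume :=
    fun n => (continuous_fB_line hν hc n).aestronglyMeasurable
  have hg := integrable_inv_one_add_sq
  have hsum := hasSum_integral_of_norm_le_mul hmeas hM hg hfM
  exact ⟨summable_of_norm_le_mul hM hfM, integrable_tsum_of_norm_le_mul hmeas hM hg hfM,
    fun n => (hg.const_mul (M n)).mono' (hmeas n) (ae_of_all _ (hfM n)), hsum.summable,
    hsum.tsum_eq.symm⟩

/-- Interchanging sum and integral for the family `f_n` on the vertical line `Re z = c`. -/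
theorem sum_integral_interchange (A B ν c : ℝ) (hA : 0 < A) (hB : 0 < B)
    (hν : 0 < ν) (hc : 0 < c) :
    (∀ y : ℝ, Summable (fun n : ℕ => fB A B ν n ((c : ℂ) + y * Complex.I))) ∧
    Integrable (fun y : ℝ => ∑' n : ℕ, fB A B ν n ((c : ℂ) + y * Complex.I)) ∧
    (∀ n : ℕ, Integrable (fun y : ℝ => fB A B ν n ((c : ℂ) + y * Complex.I))) ∧
    Summable (fun n : ℕ => ∫ y : ℝ, fB A B ν n ((c : ℂ) + y * Complex.I)) ∧
    (∫ y : ℝ, ∑' n : ℕ, fB A B ν n ((c : ℂ) + y * Complex.I)) =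
      ∑' n : ℕ, ∫ y : ℝ, fB A B ν n ((c : ℂ) + y * Complex.I) :=
  sum_integral_interchange_general A B ν c hν hc
end
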